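/- With m, A in a field k of characteristic ≠ 2, s² = m² - 4, w² = (m+2+A)² - 4(m-2), q₁(x) = x² + ((-A+s-w)/2)x + (m+s)/2 and q₄(x) = x² + ((-A-s-w)/2)x + (m-s)/2, and Q₁ = (m+2+A+w)/2: disc(q₁)·disc(q₄) = (A² - 4(m-2))·Q₁² and Res(q₁, q₄) = (m² - 4)·Q₁. -/

import Mathlib

/-- Discriminant of a monic quadratic `x² + bx + c`. -/
def disc2 {K : Type*} [Field K] (b c : K) : K := b ^ 2 - 4 * c

/-- Resultant of two monic quadratics `x² + b₁x + c₁` and `x² + b₂x + c₂`. -/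
def res2 {K : Type*} [Field K] (b₁ c₁ b₂ c₂ : K) : K :=
  (b₂ - b₁) ^ 2 * c₁ - (b₂ - b₁) * (c₂ - c₁) * b₁ + (c₂ - c₁) ^ 2

/-!
The quadratics `q₄ = q₁ - s·(x + 1)` differ by a multiple of `x + 1`, so they take the same
value `Q₁ = 1 - b + c` at `-1`. Hence `Res(q₁, q₄) = s² · Q₁`, and each discriminant is
`(b - 2)² - 4 Q₁`. The hypothesis on `w` says exactly that `Q₁` is a root of
`X² - (m + 2 + A) X + (m - 2)`, which lets one trade `A·Q₁` for a polynomial in `m` and `Q₁`;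
together with `s² = m² - 4` this turns the discriminant identity into a polynomial identity.
-/

section

variable {K : Type*} [Field K]

theorem res2_sub_sub (b c d : K) : res2 b c (b - d) (c - d) = d ^ 2 * (1 - b + c) := by
  unfold res2; ring

theorem disc2_mul_disc2_sub_sub (b c d : K) :
    disc2 b c * disc2 (b - d) (c - d)
      = ((b - 2) ^ 2 - 4 * (1 - b + c)) * ((b - 2 - d) ^ 2 - 4 * (1 - b + c)) := by
  unfold disc2; ring

theorem add_div_two_sq_sub_mul_add_eq_zero (h2 : (2 : K) ≠ 0) {a c w : K}
    (hw : w ^ 2 = a ^ 2 - 4 * c) : ((a + w) / 2) ^ 2 - a * ((a + w) / 2) + c = 0 := by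
  field_simp
  linear_combination hw

theorem disc_product_eq (h2 : (2 : K) ≠ 0) {M A s Q : K} (hs : s ^ 2 = M ^ 2 - 4)
    (hQ : Q ^ 2 - (M + 2 + A) * Q + (M - 2) = 0) :
    (((M - 2 + s) / 2 - Q) ^ 2 - 4 * Q) * (((M - 2 + s) / 2 - Q - s) ^ 2 - 4 * Q)
      = (A ^ 2 - 4 * (M - 2)) * Q ^ 2 := by
  field_simp
  -- With `R := Q² - (M + 2) Q + M - 2`, `hQ` says `R - A Q = 0` and `A²Q² - R² = (AQ - R)(AQ + R)`;
  -- the left side is a polynomial in `s²`, and the `hs` coefficient is its quotient by `s² - (M² - 4)`.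
  linear_combination (s ^ 2 + M ^ 2 - 4 - 2 * (M - 2 - 2 * Q) ^ 2 - 32 * Q) * hs
    + 16 * (Q ^ 2 - (M + 2) * Q + M - 2 + A * Q) * hQ

end

/-- with `s² = m² - 4`, `w² = (m+2+A)² - 4(m-2)`,
`q₁(x) = x² + ((-A+s-w)/2)x + (m+s)/2`, `q₄(x) = x² + ((-A-s-w)/2)x + (m-s)/2`,
and `Q₁ = (m+2+A+w)/2`:
`disc(q₁)·disc(q₄) = (A² - 4(m-2))·Q₁²` and `Res(q₁, q₄) = (m² - 4)·Q₁`. -/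
theorem disc_res_q1_q4 {k K : Type*} [Field k] [Field K] [Algebra k K]
    (h2 : (2 : k) ≠ 0) (m A : k)
    (s w : K) (hs : s ^ 2 = algebraMap k K (m ^ 2 - 4))
    (hw : w ^ 2 = algebraMap k K ((m + 2 + A) ^ 2 - 4 * (m - 2))) :
    let M := algebraMap k K m
    let A' := algebraMap k K A
    let Q₁ := (M + 2 + A' + w) / 2
    disc2 ((-A' + s - w) / 2) ((M + s) / 2) * disc2 ((-A' - s - w) / 2) ((M - s) / 2)
        = algebraMap k K (A ^ 2 - 4 * (m - 2)) * Q₁ ^ 2 ∧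
    res2 ((-A' + s - w) / 2) ((M + s) / 2) ((-A' - s - w) / 2) ((M - s) / 2)
        = algebraMap k K (m ^ 2 - 4) * Q₁ := by
  intro M A' Q₁
  have h2K : (2 : K) ≠ 0 := by simpa only [map_ofNat] using (map_ne_zero (algebraMap k K)).mpr h2
  have hs' : s ^ 2 = M ^ 2 - 4 := by rw [hs, map_sub, map_pow, map_ofNat]
  have hw' : w ^ 2 = (M + 2 + A') ^ 2 - 4 * (M - 2) := by
    rw [hw]; simp only [map_sub, map_mul, map_pow, map_add, map_ofNat, M, A']
  have hQ₁ : Q₁ ^ 2 - (M + 2 + A') * Q₁ + (M - 2) = 0 :=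
    add_div_two_sq_sub_mul_add_eq_zero h2K hw'
  have hq₄ : (-A' - s - w) / 2 = (-A' + s - w) / 2 - s ∧ (M - s) / 2 = (M + s) / 2 - s := by
    constructor <;> field_simp <;> ring
  have hq₁_at_neg_one : 1 - (-A' + s - w) / 2 + (M + s) / 2 = Q₁ := by
    simp only [Q₁]; field_simp; ring
  have hb : (-A' + s - w) / 2 - 2 = (M - 2 + s) / 2 - Q₁ := by
    simp only [Q₁]; field_simp; ring
  rw [hq₄.1, hq₄.2, disc2_mul_disc2_sub_sub, res2_sub_sub, hq₁_at_neg_one, hb]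
  refine ⟨?_, by rw [hs]⟩
  rw [map_sub, map_mul, map_sub, map_pow, map_ofNat, map_ofNat]
  exact disc_product_eq h2K hs' hQ₁
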